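/- Fix t > 1 and ε > 0, let τ := inf{n ≥ 0 : W_n > t}, and let f_ε(x) := (x/ε − 1) ∧ 1 for x ≥ 0. Then for every n ∈ ℕ, ℙ(W_n > t ε) ≥ ℙ(τ ≤ n) · inf_{k ∈ ℕ} E[f_ε(W_k)]. -/

import Mathlib

/-!
On `{τ = k}`, an `F_k`-measurable event, the Markov property of the polymer writes `W_n / W_k`
as a convex combination of the shifted partition functions `W_{n-k} ∘ θ_{k, S_k}`, with
`F_k`-measurable weights given by the polymer measure of the first `k` steps. These shifted
copies are independent of `F_k` and distributed as `W_{n-k}`, so Jensen's inequality for the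
concave `f_ε` gives `E[f_ε(W_n / W_k); τ = k] ≥ ℙ(τ = k) E[f_ε(W_{n-k})]`. Since `W_k > t` on
`{τ = k}`, we have `f_ε(W_n / W_k) ≤ 1_{W_n > t ε}` there, and summing over `k ≤ n` gives the
bound.
-/

open MeasureTheory ProbabilityTheory Filter Topology

noncomputable section

namespace DirectedPolymer

variable {Ω : Type*} [MeasurableSpace Ω]

/-- The nearest-neighbor step in `ℤ^d` in direction `e.1`, forward if `e.2 = true`,
backward otherwise. -/
def step (d : ℕ) (e : Fin d × Bool) : Fin d → ℤ :=
  Pi.single e.1 (if e.2 then 1 else -1)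

/-- The position, after `k` steps, of the nearest-neighbor path started at the origin whose
successive steps are encoded by `σ`. -/
def walkPos {d n : ℕ} (σ : Fin n → Fin d × Bool) (k : ℕ) : Fin d → ℤ :=
  ∑ j : Fin n, if (j : ℕ) < k then step d (σ j) else 0

/-- The logarithmic moment generating function `λ(β) = log E[exp (β ω(1,0))]`. -/
def logMGF {d : ℕ} (P : Measure Ω) (env : ℕ × (Fin d → ℤ) → Ω → ℝ) (β : ℝ) : ℝ :=
  Real.log (∫ x, Real.exp (β * env (1, 0) x) ∂P)

/-- The renormalized partition function `W_n` of the directed polymer: the expectation, over the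
simple random walk `(S_i)` on `ℤ^d` started at the origin (uniform choice among the `2d`
neighbors at each step), of `exp (β ∑_{i=1}^n ω(i, S_i) - n λ(β))`. -/
def W {d : ℕ} (P : Measure Ω) (env : ℕ × (Fin d → ℤ) → Ω → ℝ) (β : ℝ) (n : ℕ) (x : Ω) : ℝ :=
  (2 * d : ℝ)⁻¹ ^ n * ∑ σ : Fin n → Fin d × Bool,
    Real.exp (β * ∑ i : Fin n, env ((i : ℕ) + 1, walkPos σ ((i : ℕ) + 1)) x
      - n * logMGF P env β)

/-- The environment `ω = env` is a family of i.i.d. random variables, indexed by space-time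
`ℕ × ℤ^d`, having all exponential moments: `E[exp (b |ω(1,0)|)] < ∞` for all `b ≥ 0`. -/
structure IsIIDEnv {d : ℕ} (P : Measure Ω) (env : ℕ × (Fin d → ℤ) → Ω → ℝ) : Prop where
  meas : ∀ p, Measurable (env p)
  indep : iIndepFun env P
  ident : ∀ p, IdentDistrib (env p) (env (1, 0)) P P
  expMom : ∀ b : ℝ, 0 ≤ b → Integrable (fun x => Real.exp (b * |env (1, 0) x|)) P

/-- The filtration `F_n = σ(ω(i,x) : i ≤ n, x ∈ ℤ^d)` generated by the environment. -/
def envFiltration {d : ℕ} (env : ℕ × (Fin d → ℤ) → Ω → ℝ)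
    (hmeas : ∀ p, Measurable (env p)) :
    Filtration ℕ (inferInstance : MeasurableSpace Ω) where
  seq n := ⨆ p ∈ {p : ℕ × (Fin d → ℤ) | p.1 ≤ n}, MeasurableSpace.comap (env p) inferInstance
  mono' := by
    intro i j hij
    exact iSup₂_le fun p hp => le_iSup₂_of_le p (le_trans hp hij) le_rfl
  le' n := iSup₂_le fun p _ => (hmeas p).comap_le


/-- The polymer measure of the event `{S_n = y}`, multiplied by `W_n`:
`W_n · μ_{n,β}(S_n = y)`. -/
def polymerMass {d : ℕ} (P : Measure Ω) (env : ℕ × (Fin d → ℤ) → Ω → ℝ) (β : ℝ) (n : ℕ)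
    (y : Fin d → ℤ) (x : Ω) : ℝ :=
  (2 * d : ℝ)⁻¹ ^ n * ∑ σ : Fin n → Fin d × Bool,
    if walkPos σ n = y then
      Real.exp (β * ∑ i : Fin n, env ((i : ℕ) + 1, walkPos σ ((i : ℕ) + 1)) x
        - n * logMGF P env β)
    else 0

/-- The space-time shift `θ_{n,y}` of the environment: `(θ_{n,y} ω)(·,·) = ω(n + ·, y + ·)`. -/
def shiftEnv {d : ℕ} (n : ℕ) (y : Fin d → ℤ) (env : ℕ × (Fin d → ℤ) → Ω → ℝ) :
    ℕ × (Fin d → ℤ) → Ω → ℝ :=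
  fun p => env (n + p.1, y + p.2)

/-- The hitting time `inf {n ≥ 0 : t < g n x}` of `(t, ∞)`, with value `⊤ = ∞` if the
process never exceeds `t`. -/
def hitAbove (g : ℕ → Ω → ℝ) (t : ℝ) (x : Ω) : ℕ∞ :=
  sInf {m : ℕ∞ | ∃ k : ℕ, m = (k : ℕ∞) ∧ t < g k x}

/-- The hitting time `inf {n ≥ 0 : g n x ≤ s}` of `(-∞, s]`, with value `⊤ = ∞` if the
process never goes below `s`. -/
def hitBelow (g : ℕ → Ω → ℝ) (s : ℝ) (x : Ω) : ℕ∞ :=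
  sInf {m : ℕ∞ | ∃ k : ℕ, m = (k : ℕ∞) ∧ g k x ≤ s}

section HittingTime

variable {α : Type*} {g : ℕ → α → ℝ} {t : ℝ} {x : α} {k : ℕ}

theorem hitAbove_eq_natCast_iff :
    hitAbove g t x = k ↔ t < g k x ∧ ∀ j < k, g j x ≤ t := by
  unfold hitAbove
  constructor
  · intro h
    have hne : {m : ℕ∞ | ∃ k : ℕ, m = k ∧ t < g k x}.Nonempty :=
      Set.nonempty_iff_ne_empty.2 fun hemp => by
        rw [hemp, sInf_empty] at h
        exact ENat.top_ne_natCast k h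
    obtain ⟨j, hj, hlt⟩ := h ▸ csInf_mem hne
    refine ⟨Nat.cast_inj.1 hj ▸ hlt, fun i hi => not_lt.1 fun hlt' => ?_⟩
    exact (h ▸ sInf_le ⟨i, rfl, hlt'⟩ : (k : ℕ∞) ≤ i).not_gt (by exact_mod_cast hi)
  · rintro ⟨hk, hmin⟩
    refine le_antisymm (sInf_le ⟨k, rfl, hk⟩) (le_sInf ?_)
    rintro _ ⟨j, rfl, hj⟩
    exact_mod_cast not_lt.1 fun hjk => (hmin j hjk).not_gt hj

theorem measurableSet_hitAbove_eq {m : MeasurableSpace α} (hg : ∀ j ≤ k, Measurable[m] (g j)) :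
    MeasurableSet[m] {x | hitAbove g t x = k} := by
  simp_rw [hitAbove_eq_natCast_iff, Set.ofPred_and, Set.ofPred_forall]
  exact (measurableSet_lt measurable_const (hg k le_rfl)).inter
    (.iInter fun j => .iInter fun hj => measurableSet_le (hg j hj.le) measurable_const)

theorem setOf_hitAbove_le_eq_biUnion (n : ℕ) :
    {x | hitAbove g t x ≤ n} = ⋃ k ∈ Finset.range (n + 1), {x | hitAbove g t x = k} := by
  ext x
  simp [ENat.le_natCast_iff, and_comm]

theorem measureReal_hitAbove_le [MeasurableSpace α] (μ : Measure α) [IsFiniteMeasure μ]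
    (hg : ∀ k, Measurable (g k)) (n : ℕ) :
    μ.real {x | hitAbove g t x ≤ n} =
      ∑ k ∈ Finset.range (n + 1), μ.real {x | hitAbove g t x = k} := by
  rw [setOf_hitAbove_le_eq_biUnion]
  refine measureReal_biUnion_finset (fun i _ j _ hij => Set.disjoint_left.2 fun x hi hj => ?_)
    fun k _ => measurableSet_hitAbove_eq fun j _ => hg j
  exact hij (Nat.cast_injective (hi.symm.trans hj))

theorem sum_measureReal_hitAbove_eq_inter_le [MeasurableSpace α] (μ : Measure α)
    [IsFiniteMeasure μ] (hg : ∀ k, Measurable (g k)) (n : ℕ) (B : Set α) :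
    ∑ k ∈ Finset.range (n + 1), μ.real ({x | hitAbove g t x = k} ∩ B) ≤ μ.real B := by
  calc ∑ k ∈ Finset.range (n + 1), μ.real ({x | hitAbove g t x = k} ∩ B)
      = (μ.restrict B).real {x | hitAbove g t x ≤ n} := by
        rw [measureReal_hitAbove_le _ hg]
        exact Finset.sum_congr rfl fun k _ =>
          (measureReal_restrict_apply (measurableSet_hitAbove_eq fun j _ => hg j)).symm
    _ ≤ μ.real B :=
        (measureReal_mono (Set.subset_univ _)).trans_eq (measureReal_restrict_apply_univ B)

end HittingTime

def cutoff (ε z : ℝ) : ℝ := min (z / ε - 1) 1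

section Cutoff

variable {ε z : ℝ}

theorem concaveOn_cutoff (ε : ℝ) : ConcaveOn ℝ Set.univ (cutoff ε) := by
  refine ConcaveOn.inf ⟨convex_univ, fun x _ y _ a b _ _ hab => le_of_eq ?_⟩
    (concaveOn_const 1 convex_univ)
  simp only [smul_eq_mul, div_eq_mul_inv]
  linear_combination -hab

theorem measurable_cutoff (ε : ℝ) : Measurable (cutoff ε) := by
  unfold cutoff; fun_prop

theorem abs_cutoff_le_one (hε : 0 < ε) (hz : 0 ≤ z) : |cutoff ε z| ≤ 1 :=
  abs_le.2 ⟨le_min (by linarith [div_nonneg hz hε.le]) (by norm_num), min_le_right _ _⟩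

theorem cutoff_nonpos (hε : 0 < ε) (hz : z ≤ ε) : cutoff ε z ≤ 0 :=
  (min_le_left _ _).trans (by rw [sub_nonpos]; exact div_le_one_of_le₀ hz hε.le)

end Cutoff

section Walk

variable {d k m : ℕ} (σ₁ : Fin k → Fin d × Bool) (σ₂ : Fin m → Fin d × Bool)

theorem walkPos_append_of_le {j : ℕ} (hj : j ≤ k) :
    walkPos (Fin.append σ₁ σ₂) j = walkPos σ₁ j := by
  have hlate : ∀ i : Fin m, ¬ k + (i : ℕ) < j := fun i => by omega
  unfold walkPos
  simp [Fin.sum_univ_add, Fin.append_left, hlate]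

theorem walkPos_append_add (j : ℕ) :
    walkPos (Fin.append σ₁ σ₂) (k + j) = walkPos σ₁ k + walkPos σ₂ j := by
  have hearly : ∀ i : Fin k, (i : ℕ) < k + j := fun i => by omega
  unfold walkPos
  simp [Fin.sum_univ_add, Fin.append_left, Fin.append_right, hearly]

theorem sum_env_walkPos_append {α : Type*} (env : ℕ × (Fin d → ℤ) → α → ℝ) (x : α) :
    ∑ i : Fin (k + m), env ((i : ℕ) + 1, walkPos (Fin.append σ₁ σ₂) ((i : ℕ) + 1)) x =
      ∑ i : Fin k, env ((i : ℕ) + 1, walkPos σ₁ ((i : ℕ) + 1)) x +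
        ∑ i : Fin m, shiftEnv k (walkPos σ₁ k) env ((i : ℕ) + 1, walkPos σ₂ ((i : ℕ) + 1)) x := by
  rw [Fin.sum_univ_add]
  congr 1
  · refine Finset.sum_congr rfl fun i _ => ?_
    rw [Fin.val_castAdd, walkPos_append_of_le σ₁ σ₂ i.is_lt]
  · refine Finset.sum_congr rfl fun i _ => ?_
    rw [Fin.val_natAdd, add_assoc, walkPos_append_add]
    rfl

end Walk

/-- `σ(ω(p) : p ∈ s)`; the filtration `F_k` is `envSigma env {p | p.1 ≤ k}`. -/
abbrev envSigma {d : ℕ} (env : ℕ × (Fin d → ℤ) → Ω → ℝ) (s : Set (ℕ × (Fin d → ℤ))) :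
    MeasurableSpace Ω :=
  ⨆ p ∈ s, MeasurableSpace.comap (env p) inferInstance

theorem envSigma_le {d : ℕ} {env : ℕ × (Fin d → ℤ) → Ω → ℝ} (hmeas : ∀ p, Measurable (env p))
    (s : Set (ℕ × (Fin d → ℤ))) : envSigma env s ≤ ‹MeasurableSpace Ω› :=
  iSup₂_le fun p _ => (hmeas p).comap_le

section PathWeight

variable {d : ℕ} (P : Measure Ω) (env : ℕ × (Fin d → ℤ) → Ω → ℝ) (β : ℝ)

def pathWeight (k : ℕ) (σ : Fin k → Fin d × Bool) (x : Ω) : ℝ :=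
  (2 * d : ℝ)⁻¹ ^ k *
    Real.exp (β * ∑ i : Fin k, env ((i : ℕ) + 1, walkPos σ ((i : ℕ) + 1)) x
      - k * logMGF P env β)

theorem sum_pathWeight (k : ℕ) (x : Ω) :
    ∑ σ : Fin k → Fin d × Bool, pathWeight P env β k σ x = W P env β k x :=
  (Finset.mul_sum ..).symm

theorem pathWeight_nonneg (k : ℕ) (σ : Fin k → Fin d × Bool) (x : Ω) :
    0 ≤ pathWeight P env β k σ x := by
  unfold pathWeight; positivity

theorem W_nonneg (k : ℕ) (x : Ω) : 0 ≤ W P env β k x := by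
  rw [← sum_pathWeight]; exact Finset.sum_nonneg fun σ _ => pathWeight_nonneg P env β k σ x

theorem pathWeight_le_W (k : ℕ) (σ : Fin k → Fin d × Bool) (x : Ω) :
    pathWeight P env β k σ x ≤ W P env β k x := by
  rw [← sum_pathWeight]
  exact Finset.single_le_sum (fun σ _ => pathWeight_nonneg P env β k σ x) (Finset.mem_univ σ)

theorem measurable_pathWeight (hmeas : ∀ p, Measurable (env p)) (k : ℕ)
    (σ : Fin k → Fin d × Bool) : Measurable (pathWeight P env β k σ) := by
  unfold pathWeight; fun_prop

theorem measurable_W (hmeas : ∀ p, Measurable (env p)) (k : ℕ) : Measurable (W P env β k) := by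
  unfold W; fun_prop

variable {k : ℕ} {s : Set (ℕ × (Fin d → ℤ))}

theorem measurable_pathWeight_envSigma (hs : ∀ p : ℕ × (Fin d → ℤ), 0 < p.1 → p.1 ≤ k → p ∈ s)
    (σ : Fin k → Fin d × Bool) : Measurable[envSigma env s] (pathWeight P env β k σ) := by
  have hcoord : ∀ i : Fin k, Measurable[envSigma env s] (env ((i : ℕ) + 1, walkPos σ (i + 1))) :=
    fun i => measurable_iff_comap_le.2 <|
      le_iSup₂ (f := fun q _ => MeasurableSpace.comap (env q) _) _
        (hs _ (Nat.succ_pos _) i.is_lt.nat_succ_le)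
  unfold pathWeight
  fun_prop

theorem measurable_W_envSigma (hs : ∀ p : ℕ × (Fin d → ℤ), 0 < p.1 → p.1 ≤ k → p ∈ s) :
    Measurable[envSigma env s] (W P env β k) := by
  rw [show W P env β k = fun x => ∑ σ, pathWeight P env β k σ x from
    funext fun x => (sum_pathWeight P env β k x).symm]
  exact Finset.measurable_sum _ fun σ _ => measurable_pathWeight_envSigma P env β hs σ

end PathWeight

theorem iIndepFun.identDistrib_precomp {ι 𝓧 : Type*} [MeasurableSpace 𝓧] {P : Measure Ω}
    {X : ι → Ω → 𝓧} (hX : ∀ i, Measurable (X i)) (hind : iIndepFun X P) {g : ι → ι}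
    (hg : g.Injective) (hident : ∀ i, IdentDistrib (X (g i)) (X i) P P) :
    IdentDistrib (fun ω i => X (g i) ω) (fun ω i => X i ω) P P where
  aemeasurable_fst := (measurable_pi_lambda _ fun i => hX (g i)).aemeasurable
  aemeasurable_snd := (measurable_pi_lambda _ hX).aemeasurable
  map_eq := by
    have := hind.isProbabilityMeasure
    rw [(hind.precomp hg).map_fun_eq_infinitePi_map (fun i => hX (g i)),
      hind.map_fun_eq_infinitePi_map hX]
    simp_rw [fun i => (hident i).map_eq]

section Shift

variable {d : ℕ} (P : Measure Ω) {env : ℕ × (Fin d → ℤ) → Ω → ℝ} (β : ℝ)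

theorem logMGF_shiftEnv (hident : ∀ p, IdentDistrib (env p) (env (1, 0)) P P) (k : ℕ)
    (y : Fin d → ℤ) : logMGF P (shiftEnv k y env) β = logMGF P env β := by
  have h :=
    ((hident (k + 1, y + 0)).comp (u := fun r => Real.exp (β * r)) (by fun_prop)).integral_eq
  simpa [logMGF, shiftEnv, Function.comp_def] using congrArg Real.log h

theorem pathWeight_append (hident : ∀ p, IdentDistrib (env p) (env (1, 0)) P P) {k m : ℕ}
    (σ₁ : Fin k → Fin d × Bool) (σ₂ : Fin m → Fin d × Bool) (x : Ω) :
    pathWeight P env β (k + m) (Fin.append σ₁ σ₂) x =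
      pathWeight P env β k σ₁ x * pathWeight P (shiftEnv k (walkPos σ₁ k) env) β m σ₂ x := by
  have hsplit : ∀ a b l : ℝ,
      β * (a + b) - ((k + m : ℕ) : ℝ) * l = (β * a - k * l) + (β * b - m * l) := by
    intros; push_cast; ring
  unfold pathWeight
  rw [sum_env_walkPos_append, logMGF_shiftEnv P β hident, hsplit, Real.exp_add, pow_add]
  ring

theorem W_add (hident : ∀ p, IdentDistrib (env p) (env (1, 0)) P P) (k m : ℕ) (x : Ω) :
    W P env β (k + m) x = ∑ σ : Fin k → Fin d × Bool,
      pathWeight P env β k σ x * W P (shiftEnv k (walkPos σ k) env) β m x := by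
  rw [← sum_pathWeight, ← (Fin.appendEquiv k m).sum_comp, Fintype.sum_prod_type]
  refine Finset.sum_congr rfl fun σ₁ _ => ?_
  rw [← sum_pathWeight, Finset.mul_sum]
  exact Finset.sum_congr rfl fun σ₂ _ => pathWeight_append P β hident σ₁ σ₂ x

end Shift

section Markov

variable {d : ℕ} (P : Measure Ω) {env : ℕ × (Fin d → ℤ) → Ω → ℝ} (β : ℝ)

theorem identDistrib_W_shiftEnv (henv : IsIIDEnv P env) (k m : ℕ) (y : Fin d → ℤ) :
    IdentDistrib (W P (shiftEnv k y env) β m) (W P env β m) P P := by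
  have hshift : Function.Injective fun p : ℕ × (Fin d → ℤ) => (k + p.1, y + p.2) :=
    fun p q h => by
      simp only [Prod.mk.injEq, add_right_inj] at h
      exact Prod.ext h.1 h.2
  have hfield := iIndepFun.identDistrib_precomp henv.meas henv.indep hshift
    fun p => (henv.ident _).trans (henv.ident p).symm
  let F : (ℕ × (Fin d → ℤ) → ℝ) → ℝ := fun u => (2 * d : ℝ)⁻¹ ^ m *
    ∑ σ : Fin m → Fin d × Bool,
      Real.exp (β * ∑ i : Fin m, u ((i : ℕ) + 1, walkPos σ ((i : ℕ) + 1)) - m * logMGF P env β)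
  have hF : Measurable F := by fun_prop
  convert hfield.comp hF using 1
  · funext x
    simp [F, W, logMGF_shiftEnv P β henv.ident, shiftEnv]
  · rfl

theorem integral_mul_comp_W_shiftEnv (henv : IsIIDEnv P env) {k : ℕ} {Y : Ω → ℝ}
    (hY : Measurable[envSigma env {p | p.1 ≤ k}] Y) {φ : ℝ → ℝ} (hφ : Measurable φ) (m : ℕ)
    (y : Fin d → ℤ) :
    ∫ x, Y x * φ (W P (shiftEnv k y env) β m x) ∂P =
      (∫ x, Y x ∂P) * ∫ x, φ (W P env β m x) ∂P := by
  have hindep : Indep (envSigma env {p | p.1 ≤ k}) (envSigma env {p | p.1 ≤ k}ᶜ) P :=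
    indep_biSup_compl (fun p => (henv.meas p).comap_le) henv.indep.iIndep _
  have hshift : envSigma (shiftEnv k y env) {p | 0 < p.1} ≤ envSigma env {p | p.1 ≤ k}ᶜ :=
    iSup₂_le fun p (hp : 0 < p.1) =>
      le_iSup₂_of_le (f := fun q _ => MeasurableSpace.comap (env q) _) (k + p.1, y + p.2)
        (show ¬ k + p.1 ≤ k by omega) le_rfl
  have hfuture : Measurable[envSigma env {p | p.1 ≤ k}ᶜ] (φ ∘ W P (shiftEnv k y env) β m) :=
    hφ.comp ((measurable_W_envSigma P _ β fun p hp _ => hp).mono hshift le_rfl)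
  have hYW : IndepFun Y (φ ∘ W P (shiftEnv k y env) β m) P := by
    rw [IndepFun_iff_Indep]
    exact indep_of_indep_of_le_right (indep_of_indep_of_le_left hindep hY.comap_le)
      hfuture.comap_le
  calc ∫ x, Y x * φ (W P (shiftEnv k y env) β m x) ∂P
      = (∫ x, Y x ∂P) * ∫ x, (φ ∘ W P (shiftEnv k y env) β m) x ∂P :=
        hYW.integral_fun_mul_eq_mul_integral
          (hY.mono (envSigma_le henv.meas _) le_rfl).aestronglyMeasurable
          (hfuture.mono (envSigma_le henv.meas _) le_rfl).aestronglyMeasurable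
    _ = _ := by rw [((identDistrib_W_shiftEnv P β henv k m y).comp hφ).integral_eq]; rfl

end Markov

section Jensen

variable {d : ℕ} (P : Measure Ω) {env : ℕ × (Fin d → ℤ) → Ω → ℝ} (β : ℝ)

theorem pathWeight_div_W_nonneg (k : ℕ) (σ : Fin k → Fin d × Bool) (x : Ω) :
    0 ≤ pathWeight P env β k σ x / W P env β k x :=
  div_nonneg (pathWeight_nonneg P env β k σ x) (W_nonneg P env β k x)

theorem pathWeight_div_W_le_one (k : ℕ) (σ : Fin k → Fin d × Bool) (x : Ω) :
    pathWeight P env β k σ x / W P env β k x ≤ 1 :=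
  div_le_one_of_le₀ (pathWeight_le_W P env β k σ x) (W_nonneg P env β k x)

theorem sum_pathWeight_div_W {k : ℕ} {x : Ω} (hx : 0 < W P env β k x) :
    ∑ σ : Fin k → Fin d × Bool, pathWeight P env β k σ x / W P env β k x = 1 := by
  rw [← Finset.sum_div, sum_pathWeight, div_self hx.ne']

theorem integrable_pathWeight_div_W_mul [IsFiniteMeasure P] (hmeas : ∀ p, Measurable (env p))
    {f : Ω → ℝ} (hf : Measurable f) {C : ℝ} (hfC : ∀ x, |f x| ≤ C) (k : ℕ)
    (σ : Fin k → Fin d × Bool) :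
    Integrable (fun x => pathWeight P env β k σ x / W P env β k x * f x) P :=
  .of_bound (((measurable_pathWeight P env β hmeas k σ).div (measurable_W P env β hmeas k)).mul
    hf).aestronglyMeasurable C <| ae_of_all _ fun x => by
      rw [Real.norm_eq_abs, abs_mul, abs_of_nonneg (pathWeight_div_W_nonneg P β k σ x)]
      exact (mul_le_of_le_one_left (abs_nonneg _) (pathWeight_div_W_le_one P β k σ x)).trans
        (hfC x)

theorem sum_pathWeight_div_W_mul_le (hident : ∀ p, IdentDistrib (env p) (env (1, 0)) P P)
    {φ : ℝ → ℝ} (hφ : ConcaveOn ℝ (Set.Ici 0) φ) {k : ℕ} (m : ℕ) {x : Ω}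
    (hx : 0 < W P env β k x) :
    ∑ σ : Fin k → Fin d × Bool, pathWeight P env β k σ x / W P env β k x *
        φ (W P (shiftEnv k (walkPos σ k) env) β m x) ≤
      φ (W P env β (k + m) x / W P env β k x) := by
  have hmean : W P env β (k + m) x / W P env β k x = ∑ σ : Fin k → Fin d × Bool,
      (pathWeight P env β k σ x / W P env β k x) • W P (shiftEnv k (walkPos σ k) env) β m x := by
    rw [W_add P β hident, Finset.sum_div]
    exact Finset.sum_congr rfl fun σ _ => by rw [smul_eq_mul]; ring
  rw [hmean]
  exact hφ.le_map_sum (fun σ _ => pathWeight_div_W_nonneg P β k σ x)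
    (sum_pathWeight_div_W P β hx) fun σ _ => W_nonneg P _ β m x

theorem measureReal_mul_integral_eq_setIntegral [IsFiniteMeasure P] (henv : IsIIDEnv P env)
    {φ : ℝ → ℝ} (hφm : Measurable φ) {C : ℝ} (hφb : ∀ z, 0 ≤ z → |φ z| ≤ C) {k : ℕ} {A : Set Ω}
    (hA : MeasurableSet[envSigma env {p | p.1 ≤ k}] A) (hApos : ∀ x ∈ A, 0 < W P env β k x)
    (m : ℕ) :
    P.real A * ∫ x, φ (W P env β m x) ∂P =
      ∫ x in A, ∑ σ : Fin k → Fin d × Bool, pathWeight P env β k σ x / W P env β k x *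
        φ (W P (shiftEnv k (walkPos σ k) env) β m x) ∂P := by
  set I := ∫ x, φ (W P env β m x) ∂P
  have hAm : MeasurableSet A := envSigma_le henv.meas _ _ hA
  have hρ : ∀ σ, Measurable[envSigma env {p | p.1 ≤ k}]
      fun x => pathWeight P env β k σ x / W P env β k x := fun σ =>
    (measurable_pathWeight_envSigma P env β (fun _ _ hp => hp) σ).div
      (measurable_W_envSigma P env β fun _ _ hp => hp)
  have hint : ∀ {f : Ω → ℝ} {C' : ℝ}, Measurable f → (∀ x, |f x| ≤ C') → ∀ σ,
      IntegrableOn (fun x => pathWeight P env β k σ x / W P env β k x * f x) A P :=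
    fun hf hfC σ => (integrable_pathWeight_div_W_mul P β henv.meas hf hfC k σ).integrableOn
  have hG : ∀ σ : Fin k → Fin d × Bool,
      Measurable fun x => φ (W P (shiftEnv k (walkPos σ k) env) β m x) := fun σ =>
    hφm.comp (measurable_W P _ β (fun _ => henv.meas _) m)
  calc P.real A * I
      = ∫ x in A, ∑ σ : Fin k → Fin d × Bool, pathWeight P env β k σ x / W P env β k x * I ∂P := by
        rw [setIntegral_congr_fun hAm fun x hx => by
          rw [← Finset.sum_mul, sum_pathWeight_div_W P β (hApos x hx), one_mul]]
        rw [setIntegral_const, smul_eq_mul]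
    _ = ∑ σ, ∫ x in A, pathWeight P env β k σ x / W P env β k x *
          φ (W P (shiftEnv k (walkPos σ k) env) β m x) ∂P := by
        rw [integral_finsetSum _ fun σ _ => hint measurable_const (fun _ => le_refl |I|) σ]
        refine Finset.sum_congr rfl fun σ _ => ?_
        rw [integral_mul_const, ← integral_indicator hAm, ← integral_indicator hAm]
        simp_rw [Set.indicator_mul_left]
        exact (integral_mul_comp_W_shiftEnv P β henv ((hρ σ).indicator hA) hφm m _).symm
    _ = _ := (integral_finsetSum _ fun σ _ =>
        hint (hG σ) (fun x => hφb _ (W_nonneg P _ β m x)) σ).symm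

theorem measureReal_mul_integral_le_setIntegral [IsFiniteMeasure P] (henv : IsIIDEnv P env)
    {φ : ℝ → ℝ} (hφc : ConcaveOn ℝ (Set.Ici 0) φ) (hφm : Measurable φ) {C : ℝ}
    (hφb : ∀ z, 0 ≤ z → |φ z| ≤ C) {k : ℕ} {A : Set Ω}
    (hA : MeasurableSet[envSigma env {p | p.1 ≤ k}] A) (hApos : ∀ x ∈ A, 0 < W P env β k x)
    (m : ℕ) :
    P.real A * ∫ x, φ (W P env β m x) ∂P ≤
      ∫ x in A, φ (W P env β (k + m) x / W P env β k x) ∂P := by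
  rw [measureReal_mul_integral_eq_setIntegral P β henv hφm hφb hA hApos m]
  refine setIntegral_mono_on ?_ ?_ (envSigma_le henv.meas _ _ hA)
    fun x hx => sum_pathWeight_div_W_mul_le P β henv.ident hφc m (hApos x hx)
  · exact (integrable_finsetSum _ fun σ _ => integrable_pathWeight_div_W_mul P β henv.meas
      (hφm.comp (measurable_W P _ β (fun _ => henv.meas _) m))
      (fun x => hφb _ (W_nonneg P _ β m x)) k σ).integrableOn
  · refine (Integrable.of_bound ?_ C (ae_of_all _ fun x => hφb _ ?_)).integrableOn
    · exact (hφm.comp ((measurable_W P env β henv.meas _).div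
        (measurable_W P env β henv.meas _))).aestronglyMeasurable
    · exact div_nonneg (W_nonneg P env β _ x) (W_nonneg P env β _ x)

end Jensen

section TailBound

variable {d : ℕ} (P : Measure Ω) [IsFiniteMeasure P] {env : ℕ × (Fin d → ℤ) → Ω → ℝ}
  (β : ℝ) {ε : ℝ}

theorem integrable_cutoff_comp (hε : 0 < ε) {f : Ω → ℝ} (hf : Measurable f)
    (hf₀ : ∀ x, 0 ≤ f x) : Integrable (fun x => cutoff ε (f x)) P :=
  .of_bound ((measurable_cutoff ε).comp hf).aestronglyMeasurable 1 <| ae_of_all _ fun x =>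
    abs_cutoff_le_one hε (hf₀ x)

theorem iInf_integral_cutoff_W_le (hmeas : ∀ p, Measurable (env p)) (hε : 0 < ε)
    (m : ℕ) :
    ⨅ k : ℕ, ∫ x, cutoff ε (W P env β k x) ∂P ≤ ∫ x, cutoff ε (W P env β m x) ∂P := by
  refine ciInf_le ⟨-P.real Set.univ, Set.forall_mem_range.2 fun k => ?_⟩ m
  have h := integral_mono (integrable_const (-1 : ℝ))
    (integrable_cutoff_comp P hε (measurable_W P env β hmeas k) (W_nonneg P env β k))
    fun x => (abs_le.1 (abs_cutoff_le_one hε (W_nonneg P env β k x))).1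
  simpa using h

theorem measureReal_mul_integral_cutoff_le (henv : IsIIDEnv P env) {t : ℝ} (ht : 0 ≤ t)
    (hε : 0 < ε) {k : ℕ} {A : Set Ω} (hA : MeasurableSet[envSigma env {p | p.1 ≤ k}] A)
    (hAt : ∀ x ∈ A, t < W P env β k x) (m : ℕ) :
    P.real A * ∫ x, cutoff ε (W P env β m x) ∂P ≤
      P.real (A ∩ {x | t * ε < W P env β (k + m) x}) := by
  set B := {x | t * ε < W P env β (k + m) x}
  have hAm : MeasurableSet A := envSigma_le henv.meas _ _ hA
  have hB : MeasurableSet B := measurableSet_lt measurable_const (measurable_W P env β henv.meas _)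
  have hWk : ∀ x ∈ A, 0 < W P env β k x := fun x hx => ht.trans_lt (hAt x hx)
  have hbelow : ∀ x ∈ A, cutoff ε (W P env β (k + m) x / W P env β k x) ≤ B.indicator 1 x := by
    intro x hx
    by_cases hxB : x ∈ B
    · rw [Set.indicator_of_mem hxB]
      exact min_le_right _ _
    · rw [Set.indicator_of_notMem hxB]
      refine cutoff_nonpos hε ((div_le_iff₀ (hWk x hx)).2 ?_)
      calc W P env β (k + m) x ≤ t * ε := not_lt.1 hxB
        _ ≤ ε * W P env β k x := by
          rw [mul_comm]; exact mul_le_mul_of_nonneg_left (hAt x hx).le hε.le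
  calc P.real A * ∫ x, cutoff ε (W P env β m x) ∂P
      ≤ ∫ x in A, cutoff ε (W P env β (k + m) x / W P env β k x) ∂P :=
        measureReal_mul_integral_le_setIntegral P β henv
          ((concaveOn_cutoff ε).subset (Set.subset_univ _) (convex_Ici 0)) (measurable_cutoff ε)
          (fun z hz => abs_cutoff_le_one hε hz) hA hWk m
    _ ≤ ∫ x in A, B.indicator 1 x ∂P :=
        setIntegral_mono_on (integrable_cutoff_comp P hε
            ((measurable_W P env β henv.meas _).div (measurable_W P env β henv.meas _))
            fun x => div_nonneg (W_nonneg P env β _ x) (W_nonneg P env β _ x)).integrableOn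
          ((integrable_const 1).indicator hB).integrableOn hAm hbelow
    _ = P.real (A ∩ B) := by
        simp [setIntegral_indicator hB]

end TailBound

variable (P : Measure Ω) [IsProbabilityMeasure P]

theorem tail_bound_via_concave_truncation
    {d : ℕ} (env : ℕ × (Fin d → ℤ) → Ω → ℝ) (henv : IsIIDEnv P env)
    {β : ℝ}
    {t ε : ℝ} (ht : 1 < t) (hε : 0 < ε) (n : ℕ) :
    (P {x | hitAbove (W P env β) t x ≤ (n : ℕ∞)}).toReal *
        (⨅ k : ℕ, ∫ x, min (W P env β k x / ε - 1) 1 ∂P) ≤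
      (P {x | t * ε < W P env β n x}).toReal := by
  set c := ⨅ k : ℕ, ∫ x, cutoff ε (W P env β k x) ∂P
  set τ := hitAbove (W P env β) t
  set B := {x | t * ε < W P env β n x}
  have hW := measurable_W P env β henv.meas
  have hstep : ∀ k ∈ Finset.range (n + 1),
      P.real {x | τ x = k} * c ≤ P.real ({x | τ x = k} ∩ B) := by
    intro k hk
    have h := measureReal_mul_integral_cutoff_le P β henv (by linarith) hε (A := {x | τ x = k})
      (measurableSet_hitAbove_eq fun j hj =>
        measurable_W_envSigma P env β fun _ _ hp => hp.trans hj)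
      (fun x hx => (hitAbove_eq_natCast_iff.1 hx).1) (n - k)
    rw [Nat.add_sub_cancel' (Finset.mem_range_succ_iff.1 hk)] at h
    exact (mul_le_mul_of_nonneg_left (iInf_integral_cutoff_W_le P β henv.meas hε _)
      measureReal_nonneg).trans h
  calc P.real {x | τ x ≤ n} * c = ∑ k ∈ Finset.range (n + 1), P.real {x | τ x = k} * c := by
        rw [measureReal_hitAbove_le P hW, Finset.sum_mul]
    _ ≤ ∑ k ∈ Finset.range (n + 1), P.real ({x | τ x = k} ∩ B) := Finset.sum_le_sum hstep
    _ ≤ P.real B := sum_measureReal_hitAbove_eq_inter_le P hW n B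

end DirectedPolymer
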